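/- In a level-1 phylogenetic network N on a finite set X, let Y be a subset of X with at least two elements, let u be a lowest common ancestor of Y, and let w = lsa(Y). If u ≺ w, then no directed path from w to u contains a cut arc; consequently u and w lie on a common cycle of the underlying undirected graph of N. -/

import Mathlib

open Relation

/-- A rooted phylogenetic network on a finite taxa set `X` with vertex type `V`:
a finite simple acyclic digraph with a unique root (indegree 0, reaching every
vertex), no vertices with indegree 1 and outdegree 1, whose leaves (outdegree-0
vertices) are bijectively labelled by `X`. -/
structure PhyloNetwork (V X : Type) [Fintype V] [Fintype X] where
  /-- arc relation of the digraph -/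
  Adj : V → V → Prop
  /-- acyclicity: no directed cycle -/
  acyclic : ∀ v, ¬ Relation.TransGen Adj v v
  /-- the root -/
  root : V
  /-- the root has indegree 0 -/
  root_no_parent : ∀ u, ¬ Adj u root
  /-- every vertex is reachable from the root by a directed path -/
  root_reaches : ∀ v, Relation.ReflTransGen Adj root v
  /-- no vertex has indegree 1 and outdegree 1 -/
  no_degenerate : ∀ v, ¬ ({u | Adj u v}.ncard = 1 ∧ {u | Adj v u}.ncard = 1)
  /-- the leaves are bijectively labelled by the taxa in `X` -/
  label : X ≃ {v : V // ∀ u, ¬ Adj v u}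

namespace PhyloNetwork

variable {V X : Type} [Fintype V] [Fintype X] (N : PhyloNetwork V X)

/-- a leaf is a vertex of outdegree 0 -/
def IsLeaf (v : V) : Prop := ∀ u, ¬ N.Adj v u

/-- the leaf labelled by taxon `x` -/
def leaf (x : X) : V := (N.label x).val

/-- `u` is below `v` (equivalently, `v` is above `u`): there is a directed
path from `v` to `u` -/
def below (u v : V) : Prop := Relation.ReflTransGen N.Adj v u

/-- `u` is strictly below `v` -/
def strictlyBelow (u v : V) : Prop := N.below u v ∧ u ≠ v

/-- the cluster of a vertex: the set of taxa labelling the leaves below it -/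
def cluster (v : V) : Set X := {x | N.below (N.leaf x) v}

/-- a common ancestor of a set `Y` of taxa -/
def CommonAncestor (Y : Set X) (v : V) : Prop := Y ⊆ N.cluster v

/-- a lowest common ancestor (LCA) of `Y`: a common ancestor of `Y` such that
no other common ancestor of `Y` is strictly below it -/
def IsLCA (Y : Set X) (v : V) : Prop :=
  N.CommonAncestor Y v ∧ ∀ u, N.CommonAncestor Y u → ¬ N.strictlyBelow u v

/-- `p` is a directed path from `u` to `v`, recorded as its list of vertices -/
def IsDipath (p : List V) (u v : V) : Prop :=
  p ≠ [] ∧ p.head? = some u ∧ p.getLast? = some v ∧ p.Chain' N.Adj ∧ p.Nodup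

/-- the arc `(a, b)` is traversed by the path `p` -/
def ArcIn (p : List V) (a b : V) : Prop := (a, b) ∈ p.zip p.tail

/-- a stable ancestor of `Y`: a vertex contained in every directed path from
the root to some taxon in `Y` -/
def StableAncestor (Y : Set X) (v : V) : Prop :=
  ∀ x ∈ Y, ∀ p : List V, N.IsDipath p N.root (N.leaf x) → v ∈ p

/-- the lowest stable ancestor (LSA) of `Y`: the stable ancestor of `Y`
that is below every stable ancestor of `Y` -/
def IsLSA (Y : Set X) (w : V) : Prop :=
  N.StableAncestor Y w ∧ ∀ v, N.StableAncestor Y v → N.below w v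

/-- the underlying undirected graph of the network -/
def underlying : SimpleGraph V := SimpleGraph.fromRel N.Adj

/-- indegree of a vertex -/
noncomputable def inDeg (v : V) : ℕ := {u | N.Adj u v}.ncard

/-- outdegree of a vertex -/
noncomputable def outDeg (v : V) : ℕ := {u | N.Adj v u}.ncard

/-- binary network: every non-leaf vertex has indegree at most 2 and
outdegree at most 2, and every vertex of indegree 2 has outdegree 1 -/
def Binary : Prop :=
  (∀ v, ¬ N.IsLeaf v → N.inDeg v ≤ 2 ∧ N.outDeg v ≤ 2) ∧
  (∀ v, N.inDeg v = 2 → N.outDeg v = 1)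

/-- level-1 network: binary, and any two cycles of the underlying undirected
graph are vertex-disjoint (i.e. any two cycles sharing a vertex have the same
vertex set) -/
def Level1 : Prop :=
  N.Binary ∧ ∀ (u v : V) (c₁ : N.underlying.Walk u u) (c₂ : N.underlying.Walk v v),
    c₁.IsCycle → c₂.IsCycle → ∀ w, w ∈ c₁.support → w ∈ c₂.support →
      ∀ z, (z ∈ c₁.support ↔ z ∈ c₂.support)

/-- a cut arc: an arc whose removal disconnects the underlying undirected graph -/
def CutArc (a b : V) : Prop :=
  N.Adj a b ∧ ¬ (SimpleGraph.fromRel (fun u v => N.Adj u v ∧ ¬ (u = a ∧ v = b))).Connected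

/-- a splitting ancestor of distinct taxa `x` and `y`: a (non-leaf) vertex such
that precisely one taxon from `{x, y}` is below both of its children, while the
other taxon is below exactly one of its two children -/
def SplittingAncestor (x y : X) (v : V) : Prop :=
  ∃ c₁ c₂, c₁ ≠ c₂ ∧ N.Adj v c₁ ∧ N.Adj v c₂ ∧
    ((N.below (N.leaf x) c₁ ∧ N.below (N.leaf x) c₂ ∧
        Xor' (N.below (N.leaf y) c₁) (N.below (N.leaf y) c₂)) ∨
     (N.below (N.leaf y) c₁ ∧ N.below (N.leaf y) c₂ ∧
        Xor' (N.below (N.leaf x) c₁) (N.below (N.leaf x) c₂)))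

/-- saturated level-1 network: each non-leaf vertex is contained in a cycle of
size three of the underlying undirected graph -/
def Saturated : Prop :=
  ∀ v, ¬ N.IsLeaf v → ∃ c : N.underlying.Walk v v, c.IsCycle ∧ c.length = 3

/-- the multiset of clusters induced by the vertices of the network -/
noncomputable def clusterMultiset : Multiset (Set X) :=
  (Finset.univ : Finset V).val.map N.cluster

/-- the Robinson–Foulds distance: the size of the symmetric difference of the
multisets of clusters of the two networks -/
noncomputable def rfDist {V V' X : Type} [Fintype V] [Fintype V'] [Fintype X]
    (N : PhyloNetwork V X) (N' : PhyloNetwork V' X) : ℕ :=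
  letI : DecidableEq (Set X) := Classical.decEq _
  ((N.clusterMultiset - N'.clusterMultiset) +
    (N'.clusterMultiset - N.clusterMultiset)).card

end PhyloNetwork

/-!
If an arc `(a, b)` with `w ⪰ a` and `b ⪰ u` were a cut arc, every directed path from the root to a
taxon of `Y` would pass through `b`: a path avoiding `b` never uses the arc, and together with the
downward path from `b` to that taxon it would reconnect the root with `b` after deleting the arc.
So `b` would be a stable ancestor of `Y` strictly below `lsa(Y) = w`. An arc that is not a cut arc
lies on a cycle, and in a level-1 network the cycles through consecutive arcs of a path from `w` to
`u` share a vertex and therefore coincide.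
-/

namespace List

variable {α : Type*} {r : α → α → Prop} {l : List α} {a b : α}

theorem IsChain.reflTransGen_of_head?_eq (hl : l.IsChain r) (ha : l.head? = some a) (hb : b ∈ l) :
    Relation.ReflTransGen r a b := by
  obtain ⟨ys, rfl⟩ := head?_eq_some_iff.1 ha
  rcases mem_cons.1 hb with rfl | hb
  · exact .refl
  · exact hl.cons_induction _ ys (fun _ _ hxy h => h.tail hxy) .refl b hb

theorem IsChain.reflTransGen_of_getLast?_eq (hl : l.IsChain r) (hb : l.getLast? = some b)
    (ha : a ∈ l) : Relation.ReflTransGen r a b := by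
  obtain ⟨ys, rfl⟩ := getLast?_eq_some_iff.1 hb
  rcases mem_append.1 ha with ha | ha
  · exact hl.backwards_concat_induction _ ys
      (fun _ _ hxy (h : Relation.ReflTransGen r _ b) => h.head hxy) .refl a ha
  · rw [mem_singleton.1 ha]

end List

theorem Relation.TransGen.and_of_forall_between {α : Type*} {r p : α → α → Prop} {a b : α}
    (h : TransGen r a b) (hp : ∀ c d, ReflTransGen r a c → r c d → ReflTransGen r d b → p c d) :
    TransGen (fun c d => r c d ∧ p c d) a b := by
  induction h with
  | single hab => exact .single ⟨hab, hp _ _ .refl hab .refl⟩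
  | @tail c d hac hcd ih =>
    refine .tail (ih fun x y hx hxy hy => hp x y hx hxy (hy.tail hcd)) ⟨hcd, ?_⟩
    exact hp c d hac.to_reflTransGen hcd .refl

namespace PhyloNetwork

variable {V X : Type} [Fintype V] [Fintype X] {N : PhyloNetwork V X}
  {Y : Set X} {p : List V} {a b s t u v w : V}

theorem Adj.ne (h : N.Adj a b) : a ≠ b :=
  fun hab => N.acyclic b (.single (hab ▸ h))

theorem CommonAncestor.mono (hu : N.CommonAncestor Y u) (huv : N.below u v) :
    N.CommonAncestor Y v :=
  fun _ hx => huv.trans (hu hx)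

theorem IsDipath.below_of_mem (hp : N.IsDipath p s t) (hv : v ∈ p) :
    N.below v s ∧ N.below t v := by
  obtain ⟨-, hs, ht, hc, -⟩ := hp
  exact ⟨hc.reflTransGen_of_head?_eq hs hv, hc.reflTransGen_of_getLast?_eq ht hv⟩

theorem IsDipath.below_of_arcIn (hp : N.IsDipath p s t) (h : ArcIn p a b) :
    N.below a s ∧ N.below t b :=
  ⟨(hp.below_of_mem (List.of_mem_zip h).1).1,
    (hp.below_of_mem (List.mem_of_mem_tail (List.of_mem_zip h).2)).2⟩

variable (N) in
/-- `N.CutArc a b` unfolds to `N.Adj a b ∧ ¬ (N.arcDeleted a b).Connected`. -/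
def arcDeleted (a b : V) : SimpleGraph V :=
  SimpleGraph.fromRel fun u v => N.Adj u v ∧ ¬ (u = a ∧ v = b)

theorem arcDeleted_le_underlying : N.arcDeleted a b ≤ N.underlying :=
  fun _ _ h => (SimpleGraph.fromRel_adj _ _ _).2
    ⟨h.1, h.2.imp (fun h => h.1) (fun h => h.1)⟩

theorem arcDeleted_adj_of_adj {c d : V} (h : N.Adj c d) (hd : d ≠ b) :
    (N.arcDeleted a b).Adj c d :=
  (SimpleGraph.fromRel_adj _ _ _).2 ⟨h.ne, .inl ⟨h, fun e => hd e.2⟩⟩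

/-- Going down from `b`, no arc ever enters `b` again. -/
theorem arcDeleted_reachable_of_below (h : N.below v b) : (N.arcDeleted a b).Reachable b v := by
  induction h with
  | refl => rfl
  | @tail c d hbc hcd ih =>
    have hd : d ≠ b := fun e => N.acyclic b (by subst e; exact .tail' hbc hcd)
    exact ih.trans (arcDeleted_adj_of_adj hcd hd).reachable

theorem arcDeleted_reachable_of_isDipath (hp : N.IsDipath p s t) (hb : b ∉ p) :
    (N.arcDeleted a b).Reachable s t := by
  obtain ⟨-, hs, ht, hc, -⟩ := hp
  have hc' : p.IsChain (N.arcDeleted a b).Adj :=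
    hc.imp_of_mem_imp fun _ _ _ hd h => arcDeleted_adj_of_adj h fun e => hb (e ▸ hd)
  exact (SimpleGraph.reachable_iff_reflTransGen _ _).2
    (hc'.reflTransGen_of_head?_eq hs (List.mem_of_getLast? ht))

/-- Only one arc was deleted and it enters `b`, so the root still reaches everything once it
reaches `b`. -/
theorem arcDeleted_connected (h : (N.arcDeleted a b).Reachable N.root b) :
    (N.arcDeleted a b).Connected := by
  refine (SimpleGraph.connected_iff_exists_forall_reachable _).2 ⟨N.root, fun v => ?_⟩
  induction N.root_reaches v with
  | refl => rfl
  | @tail c d _ hcd ih =>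
    by_cases hd : d = b
    · exact hd ▸ h
    · exact ih.trans (arcDeleted_adj_of_adj hcd hd).reachable

theorem CutArc.mem_of_isDipath_root (hcut : N.CutArc a b) (hv : N.below v b)
    (hp : N.IsDipath p N.root v) : b ∈ p := by
  by_contra hb
  exact hcut.2 (arcDeleted_connected
    ((arcDeleted_reachable_of_isDipath hp hb).trans (arcDeleted_reachable_of_below hv).symm))

theorem CutArc.stableAncestor (hcut : N.CutArc a b) (hb : N.CommonAncestor Y b) :
    N.StableAncestor Y b :=
  fun _ hx _ hp => hcut.mem_of_isDipath_root (hb hx) hp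

theorem IsLSA.not_cutArc (hw : N.IsLSA Y w) (hb : N.CommonAncestor Y b) (ha : N.below a w) :
    ¬ N.CutArc a b :=
  fun hcut => N.acyclic b (.tail' ((hw.2 b (hcut.stableAncestor hb)).trans ha) hcut.1)

theorem exists_isCycle_of_not_cutArc (hab : N.Adj a b) (h : ¬ N.CutArc a b) :
    ∃ (z : V) (c : N.underlying.Walk z z), c.IsCycle ∧ a ∈ c.support ∧ b ∈ c.support := by
  have hconn : (N.arcDeleted a b).Connected := not_not.1 (not_and.1 h hab)
  obtain ⟨q, hq⟩ := hconn.exists_isPath b a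
  have hadj : N.underlying.Adj a b := (SimpleGraph.fromRel_adj _ _ _).2 ⟨hab.ne, .inl hab⟩
  have hedge : s(a, b) ∉ q.edges := by
    intro he
    rcases ((SimpleGraph.fromRel_adj _ _ _).1 (q.adj_of_mem_edges he)).2 with h | h
    · exact h.2 ⟨rfl, rfl⟩
    · exact N.acyclic a (.tail (.single hab) h.1)
  let p := q.mapLe arcDeleted_le_underlying
  refine ⟨a, .cons hadj p, (SimpleGraph.Walk.cons_isCycle_iff p hadj).2 ⟨?_, ?_⟩, by simp, ?_⟩
  · exact (SimpleGraph.Walk.isPath_mapLe _).2 hq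
  · rwa [SimpleGraph.Walk.edges_mapLe_eq_edges]
  · simp [p]

/-- In a level-1 network, cycles through consecutive arcs of a directed path share a vertex and
hence coincide. -/
theorem Level1.exists_isCycle_of_transGen (hN : N.Level1)
    (h : Relation.TransGen (fun c d => N.Adj c d ∧ ¬ N.CutArc c d) w v) :
    ∃ (z : V) (c : N.underlying.Walk z z), c.IsCycle ∧ w ∈ c.support ∧ v ∈ c.support := by
  induction h with
  | single h => exact exists_isCycle_of_not_cutArc h.1 h.2
  | @tail c d _ hcd ih =>
    obtain ⟨z₁, c₁, hc₁, hw₁, hc₁c⟩ := ih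
    obtain ⟨z₂, c₂, hc₂, hc₂c, hd₂⟩ := exists_isCycle_of_not_cutArc hcd.1 hcd.2
    exact ⟨z₁, c₁, hc₁, hw₁, (hN.2 z₁ z₂ c₁ c₂ hc₁ hc₂ c hc₁c hc₂c d).2 hd₂⟩

end PhyloNetwork

theorem no_cutarc_and_common_cycle_general {V X : Type} [Fintype V] [Fintype X]
    (N : PhyloNetwork V X) (hN : N.Level1) (Y : Set X)
    (u w : V) (hu : N.IsLCA Y u) (hw : N.IsLSA Y w)
    (huw : N.strictlyBelow u w) :
    (∀ p : List V, N.IsDipath p w u → ∀ a b, PhyloNetwork.ArcIn p a b → ¬ N.CutArc a b) ∧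
    (∃ (z : V) (c : N.underlying.Walk z z), c.IsCycle ∧
        u ∈ c.support ∧ w ∈ c.support) := by
  have hnoCut : ∀ a b, N.below a w → N.below u b → ¬ N.CutArc a b :=
    fun _ _ ha hb => hw.not_cutArc (hu.1.mono hb) ha
  refine ⟨fun p hp a b hab => (hp.below_of_arcIn hab).elim (hnoCut a b), ?_⟩
  have hwu : Relation.TransGen N.Adj w u :=
    (Relation.reflTransGen_iff_eq_or_transGen.1 huw.1).resolve_left huw.2
  obtain ⟨z, c, hc, hwc, huc⟩ := hN.exists_isCycle_of_transGen
    (hwu.and_of_forall_between fun c d hc _ hd => hnoCut c d hc hd)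
  exact ⟨z, c, hc, huc, hwc⟩

/-- In a level-1 phylogenetic network `N` on a finite set `X`, let
`Y` be a subset of `X` with at least two elements, let `u` be a lowest common
ancestor of `Y`, and let `w = lsa(Y)`. If `u ≺ w`, then no directed path from
`w` to `u` contains a cut arc; consequently `u` and `w` lie on a common cycle
of the underlying undirected graph of `N`. -/
theorem no_cutarc_and_common_cycle {V X : Type} [Fintype V] [Fintype X]
    (N : PhyloNetwork V X) (hN : N.Level1) (Y : Set X) (hY : 2 ≤ Y.ncard)
    (u w : V) (hu : N.IsLCA Y u) (hw : N.IsLSA Y w)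
    (huw : N.strictlyBelow u w) :
    (∀ p : List V, N.IsDipath p w u → ∀ a b, PhyloNetwork.ArcIn p a b → ¬ N.CutArc a b) ∧
    (∃ (z : V) (c : N.underlying.Walk z z), c.IsCycle ∧
        u ∈ c.support ∧ w ∈ c.support) :=
  no_cutarc_and_common_cycle_general N hN Y u w hu hw huw
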